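/- arXiv:1305.2386 — 2 statements merged into one kernel-verified Lean document; each statement's English description precedes it below -/
import Mathlib

section
/- Let a profile have exactly 3 alternatives and an even number 2k of voters (k ≥ 1), suppose exactly k voters rank alternative a last and all remaining k voters rank a first. Then Condorcet's method has at least two winners at this profile. -/
open Finset

attribute [local instance] Classical.propDecidable

noncomputable section

/-- A preference profile for `n` voters: each voter has a ballot, a list of
alternatives ordered from most preferred (head) to least preferred (last). -/
abbrev Profile (n : ℕ) (A : Type*) := Fin n → List A

variable {A : Type*} [DecidableEq A]

/-- A valid profile: every ballot is a strict linear order on the alternatives,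
i.e. a duplicate-free list containing every alternative. -/
def IsProfile {n : ℕ} (P : Profile n A) : Prop :=
  ∀ i, (P i).Nodup ∧ ∀ a : A, a ∈ P i

/-- The voter with ballot `l` prefers `x` to `y`. -/
def Prefers (l : List A) (x y : A) : Prop := l.idxOf x < l.idxOf y

/-- The number of voters who rank `a` last (at the bottom of their list). -/
def lastCount {n : ℕ} (P : Profile n A) (a : A) : ℕ :=
  (univ.filter fun i => (P i).getLast? = some a).card

/-- The number of voters who rank `a` first (at the top of their list). -/
def firstCount {n : ℕ} (P : Profile n A) (a : A) : ℕ :=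
  (univ.filter fun i => (P i).head? = some a).card

/-- The number of voters preferring `x` to `y`. -/
def prefCount {n : ℕ} (P : Profile n A) (x y : A) : ℕ :=
  (univ.filter fun i => Prefers (P i) x y).card

/-- `x` defeats `y` in a pairwise majority contest: strictly more voters
prefer `x` to `y` than prefer `y` to `x`. -/
def Defeats {n : ℕ} (P : Profile n A) (x y : A) : Prop :=
  prefCount P y x < prefCount P x y

/-- Condorcet's method: the winners are the alternatives defeated by no other alternative. -/
def CondorcetWinners {n : ℕ} (P : Profile n A) : Set A :=
  {a | ∀ b, ¬ Defeats P b a}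

/-- `a` is a Condorcet winner: it is the unique winner of Condorcet's method. -/
def IsCondorcetWinner {n : ℕ} (P : Profile n A) (a : A) : Prop :=
  CondorcetWinners P = {a}

/-! Since every voter ranks `a` first or last, the voters preferring another alternative `x` to `a`
are exactly the `k` who rank `a` last, and the other `k` prefer `a` to `x`. So `a` ties with
everyone: it is a winner that defeats nobody. Of the two remaining alternatives, the one not
defeated by the other is then a second winner. -/

section Ballots

variable {A : Type*} [DecidableEq A] {l : List A} {x y : A}

theorem Prefers.asymm (h : Prefers l x y) : ¬ Prefers l y x :=
  lt_asymm h

theorem prefers_or_prefers (hx : x ∈ l) (hxy : x ≠ y) : Prefers l x y ∨ Prefers l y x :=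
  lt_or_gt_of_ne fun h => hxy ((List.idxOf_inj hx).mp h)

theorem prefers_of_head?_eq (hxy : x ≠ y) (h : l.head? = some y) : Prefers l y x := by
  obtain ⟨t, rfl⟩ := List.head?_eq_some_iff.mp h
  simp [Prefers, List.idxOf_cons_ne _ hxy.symm]

theorem prefers_of_getLast?_eq (hl : l.Nodup) (hx : x ∈ l) (hxy : x ≠ y)
    (h : l.getLast? = some y) : Prefers l x y := by
  obtain ⟨t, rfl⟩ := List.getLast?_eq_some_iff.mp h
  have hxt : x ∈ t := by simpa [hxy] using hx
  have hyt : y ∉ t := fun hyt => (List.nodup_append.mp hl).2.2 y hyt y (by simp) rfl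
  simp only [Prefers, List.idxOf_append_of_mem hxt, List.idxOf_append_of_notMem hyt]
  have := List.idxOf_lt_length_iff.mpr hxt
  omega

end Ballots

section Profiles

variable {A : Type*} [DecidableEq A] {n : ℕ} {P : Profile n A} {x y a : A}

theorem Defeats.asymm (h : Defeats P x y) : ¬ Defeats P y x :=
  lt_asymm h

theorem Defeats.irrefl : ¬ Defeats P x x :=
  lt_irrefl _

theorem prefCount_add_prefCount (hP : IsProfile P) (hxy : x ≠ y) :
    prefCount P x y + prefCount P y x = n := by
  have hsplit :
      (univ.filter fun i => ¬ Prefers (P i) x y) = univ.filter fun i => Prefers (P i) y x := by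
    refine filter_congr fun i _ => ⟨fun h => ?_, Prefers.asymm⟩
    exact (prefers_or_prefers ((hP i).2 x) hxy).resolve_left h
  rw [prefCount, prefCount, ← hsplit, card_filter_add_card_filter_not, card_univ, Fintype.card_fin]

theorem prefCount_eq_lastCount (hP : IsProfile P)
    (hfirst : ∀ i, (P i).getLast? ≠ some a → (P i).head? = some a) (hx : x ≠ a) :
    prefCount P x a = lastCount P a := by
  refine congrArg card (filter_congr fun i _ => ⟨fun hxa => ?_, ?_⟩)
  · by_contra hlast
    exact hxa.asymm (prefers_of_head?_eq hx (hfirst i hlast))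
  · exact prefers_of_getLast?_eq (hP i).1 ((hP i).2 x) hx

theorem exists_ne_mem_condorcetWinners [Fintype A] (hA : Fintype.card A = 3)
    (ha : ∀ x, ¬ Defeats P a x) : ∃ w ≠ a, w ∈ CondorcetWinners P := by
  obtain ⟨b, c, hbc, hothers⟩ : ∃ b c, b ≠ c ∧ univ.erase a = {b, c} :=
    card_eq_two.mp (by rw [card_erase_of_mem (mem_univ a), card_univ, hA])
  wlog hcb : ¬ Defeats P c b generalizing b c
  · exact this c b hbc.symm (by rw [hothers, pair_comm]) (not_not.mp hcb).asymm
  have hb : b ≠ a := ne_of_mem_erase (hothers ▸ mem_insert_self b {c})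
  refine ⟨b, hb, fun y hy => ?_⟩
  by_cases hya : y = a
  · exact ha b (hya ▸ hy)
  have hy_other : y ∈ ({b, c} : Finset A) := hothers ▸ mem_erase.mpr ⟨hya, mem_univ y⟩
  rcases mem_insert.mp hy_other with rfl | hyc
  · exact Defeats.irrefl hy
  · exact hcb (mem_singleton.mp hyc ▸ hy)

theorem two_le_ncard_condorcetWinners_of_ties [Fintype A] (hA : Fintype.card A = 3)
    (hties : ∀ x, prefCount P a x = prefCount P x a) : 2 ≤ (CondorcetWinners P).ncard := by
  have ha : a ∈ CondorcetWinners P := fun x hx => ne_of_lt hx (hties x)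
  obtain ⟨w, hwa, hw⟩ := exists_ne_mem_condorcetWinners hA fun x hx => ne_of_gt hx (hties x)
  exact (Set.one_lt_ncard_iff).mpr ⟨a, w, ha, hw, hwa.symm⟩

end Profiles

theorem three_alts_half_last_two_winners_general {A : Type*} [Fintype A] [DecidableEq A]
    (hA : Fintype.card A = 3) {k : ℕ}
    (P : Profile (2 * k) A) (hP : IsProfile P)
    (a : A) (hlast : lastCount P a = k)
    (hfirst : ∀ i, (P i).getLast? ≠ some a → (P i).head? = some a) :
    2 ≤ (CondorcetWinners P).ncard := by
  refine two_le_ncard_condorcetWinners_of_ties (a := a) hA fun x => ?_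
  rcases eq_or_ne x a with rfl | hx
  · rfl
  have hxa : prefCount P x a = k := (prefCount_eq_lastCount hP hfirst hx).trans hlast
  have := prefCount_add_prefCount hP hx
  omega

/-- with exactly 3 alternatives and `2k` voters (`k ≥ 1`), if exactly
`k` voters rank `a` last and all remaining `k` voters rank `a` first, then
Condorcet's method has at least two winners. -/
theorem three_alts_half_last_two_winners {A : Type*} [Fintype A] [DecidableEq A]
    (hA : Fintype.card A = 3) {k : ℕ} (hk : 1 ≤ k)
    (P : Profile (2 * k) A) (hP : IsProfile P)
    (a : A) (hlast : lastCount P a = k)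
    (hfirst : ∀ i, (P i).getLast? ≠ some a → (P i).head? = some a) :
    2 ≤ (CondorcetWinners P).ncard :=
  three_alts_half_last_two_winners_general hA P hP a hlast hfirst
end
end

section
/- The L.P.R. procedure does not satisfy independence of irrelevant alternatives: there exist two preference profiles (for 3 alternatives a, b, c and 4 voters) and alternatives a and b such that at the first profile b is an L.P.R. winner and a is not, every voter has the same relative ranking of a versus b in both profiles, yet at the second profile a is an L.P.R. winner. -/
open Finset

attribute [local instance] Classical.propDecidable

noncomputable section

variable {A : Type*} [DecidableEq A]

/-- The bottom alternative of ballot `l` among the still-remaining alternatives `S`. -/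
def bottomAmong (S : Finset A) (l : List A) : Option A :=
  (l.filter fun x => decide (x ∈ S)).getLast?

/-- The number of voters ranking `a` last among the remaining alternatives `S`. -/
def hLastCount {n : ℕ} (P : Profile n A) (S : Finset A) (a : A) : ℕ :=
  (univ.filter fun i => bottomAmong S (P i) = some a).card

/-- One round of the L.P.R. procedure: delete from `S` the alternative(s)
currently appearing at the bottom of the largest number of lists,
i.e. keep those that are not maximal. -/
def lprStep {n : ℕ} (P : Profile n A) (S : Finset A) : Finset A :=
  S.filter fun a => ∃ b ∈ S, hLastCount P S a < hLastCount P S b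

/-- Iterating the L.P.R. rounds; once a round would delete every remaining
alternative, the process stops (those alternatives are the ones deleted last). -/
def lprIter {n : ℕ} [Fintype A] (P : Profile n A) : ℕ → Finset A
  | 0 => Finset.univ
  | k + 1 =>
      let S := lprIter P k
      if lprStep P S = ∅ then S else lprStep P S

/-- L.P.R. winners: the alternative(s) deleted in the final round. -/
def LPRWinners {n : ℕ} [Fintype A] (P : Profile n A) : Finset A :=
  lprIter P (Fintype.card A)

/-! In `P`, alternatives `0` and `2` are each ranked last by two voters and are deleted together,
leaving `1` as the sole winner. The last two voters of `P'` only raise `0` above `2`, which does not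
change how anyone ranks `0` against `1`; but now `2` is everyone's last choice and is deleted alone,
and `0` and `1` then tie, both being ranked last among `{0, 1}` by two voters. -/

theorem lprStep_singleton {n : ℕ} (P : Profile n A) (a : A) : lprStep P {a} = ∅ := by
  simp [lprStep]

section Iteration

variable {n : ℕ} [Fintype A] (P : Profile n A)

theorem lprIter_succ_of_lprStep_eq_empty {k : ℕ} (h : lprStep P (lprIter P k) = ∅) :
    lprIter P (k + 1) = lprIter P k := by
  simp [lprIter, h]

theorem lprIter_succ_of_lprStep_ne_empty {k : ℕ} (h : lprStep P (lprIter P k) ≠ ∅) :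
    lprIter P (k + 1) = lprStep P (lprIter P k) := by
  simp [lprIter, h]

theorem lprIter_eq_of_le {k m : ℕ} (h : lprStep P (lprIter P k) = ∅) (hkm : k ≤ m) :
    lprIter P m = lprIter P k := by
  induction m, hkm using Nat.le_induction with
  | base => rfl
  | succ m _ ih => rw [lprIter_succ_of_lprStep_eq_empty P (ih ▸ h), ih]

theorem lprWinners_eq_lprStep_univ [Nonempty A] (h₁ : lprStep P univ ≠ ∅)
    (h₂ : lprStep P (lprStep P univ) = ∅) : LPRWinners P = lprStep P univ := by
  have hIter₁ : lprIter P 1 = lprStep P univ := lprIter_succ_of_lprStep_ne_empty P h₁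
  rw [← hIter₁]
  exact lprIter_eq_of_le P (hIter₁ ▸ h₂) Fintype.card_pos

end Iteration

namespace LPRCounterexample

def P : Profile 4 (Fin 3) := ![[0, 1, 2], [0, 1, 2], [1, 2, 0], [1, 2, 0]]

def P' : Profile 4 (Fin 3) := ![[0, 1, 2], [0, 1, 2], [1, 0, 2], [1, 0, 2]]

theorem isProfile_P : IsProfile P := by
  unfold IsProfile
  decide

theorem isProfile_P' : IsProfile P' := by
  unfold IsProfile
  decide

theorem prefers_P_iff_prefers_P' (i : Fin 4) : Prefers (P i) 0 1 ↔ Prefers (P' i) 0 1 := by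
  unfold Prefers
  revert i
  decide

theorem lprWinners_P : LPRWinners P = {1} := by
  have hStep : lprStep P univ = {1} := by decide
  rw [lprWinners_eq_lprStep_univ P (by simp [hStep]) (by rw [hStep, lprStep_singleton]), hStep]

theorem lprWinners_P' : LPRWinners P' = {0, 1} := by
  have hStep : lprStep P' univ = {0, 1} := by decide
  have hTie : lprStep P' {0, 1} = ∅ := by decide
  rw [lprWinners_eq_lprStep_univ P' (by simp [hStep]) (by rw [hStep, hTie]), hStep]

end LPRCounterexample

/-- the L.P.R. procedure does not satisfy independence of irrelevant
alternatives: there are two profiles (3 alternatives, 4 voters) and alternatives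
`a`, `b` such that at the first profile `b` is an L.P.R. winner and `a` is not,
every voter has the same relative ranking of `a` versus `b` in both profiles,
yet at the second profile `a` is an L.P.R. winner. -/
theorem lpr_not_IIA :
    ∃ (P P' : Profile 4 (Fin 3)) (a b : Fin 3),
      IsProfile P ∧ IsProfile P' ∧ a ≠ b ∧
      b ∈ LPRWinners P ∧ a ∉ LPRWinners P ∧
      (∀ i, Prefers (P i) a b ↔ Prefers (P' i) a b) ∧
      a ∈ LPRWinners P' :=
  open LPRCounterexample in
  ⟨P, P', 0, 1, isProfile_P, isProfile_P', by decide, by simp [lprWinners_P],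
    by simp [lprWinners_P], prefers_P_iff_prefers_P', by simp [lprWinners_P']⟩
end
end
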